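/- arXiv:1608.02690 — 3 statements merged into one kernel-verified Lean document; each statement's English description precedes it below -/
import Mathlib

section
/- Let $r_r, r_f, r_c, \mu_I, \mu_C$ be constants with $\eta := \mu_I + \mu_C - r_f > r_r$, $\alpha \in [0,1]$, $L_I, L_C \in [0,1]$, $T > 0$. Define $K(t) = \frac{1 - e^{-(\eta - r_r)(T-t)}}{\eta - r_r}$ and, for a function $\hat V: [0,T] \to \mathbb{R}$ satisfying $\hat V'(t) = r_r \hat V(t)$, set $u(t) = \big((r_r - r_f) + \alpha(r_f - r_c)\big)K(t)\hat V(t) + (\mu_C - r_f)L_C K(t)\big((1-\alpha)\hat V(t)\big)^- - (\mu_I - r_f)L_I K(t)\big((1-\alpha)\hat V(t)\big)^+$. Then $u$ satisfies $-u'(t) = (r_f - r_c)\alpha \hat V(t) + (r_r - r_f)\hat V(t) + (\mu_I - r_f)\tilde\theta_I(\hat V(t)) + (\mu_C - r_f)\tilde\theta_C(\hat V(t)) - \eta u(t)$ with $u(T) = 0$, where $\tilde\theta_I(v) = -L_I((1-\alpha)v)^+$ and $\tilde\theta_C(v) = L_C((1-\alpha)v)^-$. -/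
/-- The kernel K(t) = (1 - e^{-(η-r_r)(T-t)})/(η-r_r). -/
noncomputable def Kker (η rr T t : ℝ) : ℝ :=
  (1 - Real.exp (-(η - rr) * (T - t))) / (η - rr)

/-- The explicit XVA in Piterbarg's model with defaults. -/
noncomputable def xvaDef (rr rf rc μI μC α L_I L_C T : ℝ) (V : ℝ → ℝ) (t : ℝ) : ℝ :=
  ((rr - rf) + α * (rf - rc)) * Kker (μI + μC - rf) rr T t * V t
    + (μC - rf) * L_C * Kker (μI + μC - rf) rr T t * max (-((1 - α) * V t)) 0
    - (μI - rf) * L_I * Kker (μI + μC - rf) rr T t * max ((1 - α) * V t) 0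

/-!
Every function `W` with `W' = r_r W` is `W(0) e^{r_r t}`, so it has constant sign and its
positive part again solves `W' = r_r W`; this applies to `±(1 - α) V̂`. The kernel solves
`K' = (η - r_r) K - 1`, `K(T) = 0`, hence each of the three terms `c K W` of the XVA satisfies
`(c K W)' = η (c K W) - c W`, and the ODE follows by linearity.
-/

open Real

section GrowthODE

variable {r : ℝ} {V : ℝ → ℝ}

theorem eq_mul_exp_of_hasDerivAt (hV : ∀ t, HasDerivAt V (r * V t) t) (t : ℝ) :
    V t = V 0 * exp (r * t) := by
  have hderiv : ∀ s, HasDerivAt (fun u => V u * exp (-r * u)) 0 s := fun s => by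
    have hexp : HasDerivAt (fun u => exp (-r * u)) (exp (-r * s) * -r) s := by
      simpa using ((hasDerivAt_id s).const_mul (-r)).exp
    exact ((hV s).mul hexp).congr_deriv (by ring)
  have hconst : V t * exp (-r * t) = V 0 := by
    simpa using is_const_of_deriv_eq_zero (fun s => (hderiv s).differentiableAt)
      (fun s => (hderiv s).deriv) t 0
  rw [← hconst, mul_assoc, ← exp_add]
  simp

theorem hasDerivAt_const_mul_of_hasDerivAt (hV : ∀ t, HasDerivAt V (r * V t) t) (c t : ℝ) :
    HasDerivAt (fun s => c * V s) (r * (c * V t)) t :=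
  ((hV t).const_mul c).congr_deriv (by ring)

theorem hasDerivAt_max_zero_of_hasDerivAt (hV : ∀ t, HasDerivAt V (r * V t) t) (t : ℝ) :
    HasDerivAt (fun s => max (V s) 0) (r * max (V t) 0) t := by
  have hform : ∀ s, max (V s) 0 = max (V 0) 0 * exp (r * s) := fun s => by
    rw [eq_mul_exp_of_hasDerivAt hV s, max_mul_of_nonneg _ _ (exp_nonneg _), zero_mul]
  have hexp : HasDerivAt (fun s => exp (r * s)) (exp (r * t) * r) t := by
    simpa using ((hasDerivAt_id t).const_mul r).exp
  rw [funext hform, hform t]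
  exact (hexp.const_mul _).congr_deriv (by ring)

end GrowthODE

section Kernel

variable {η rr T : ℝ}

@[simp]
theorem Kker_self : Kker η rr T T = 0 := by
  simp [Kker]

theorem hasDerivAt_Kker (hne : η ≠ rr) (t : ℝ) :
    HasDerivAt (Kker η rr T) ((η - rr) * Kker η rr T t - 1) t := by
  have hsub : η - rr ≠ 0 := sub_ne_zero.mpr hne
  have hexp : HasDerivAt (fun s => exp (-(η - rr) * (T - s)))
      (exp (-(η - rr) * (T - t)) * (η - rr)) t := by
    simpa using (((hasDerivAt_id t).const_sub T).const_mul (-(η - rr))).exp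
  refine ((hexp.const_sub 1).div_const (η - rr)).congr_deriv ?_
  simp only [Kker]
  field_simp
  ring

theorem hasDerivAt_mul_Kker_mul {W : ℝ → ℝ} (hne : η ≠ rr)
    (hW : ∀ t, HasDerivAt W (rr * W t) t) (c t : ℝ) :
    HasDerivAt (fun s => c * Kker η rr T s * W s)
      (η * (c * Kker η rr T t * W t) - c * W t) t :=
  (((hasDerivAt_Kker hne t).const_mul c).mul (hW t)).congr_deriv (by ring)

end Kernel

theorem piterbarg_defaults_ode_general (rr rf rc μI μC α L_I L_C T : ℝ)
    (hη : rr < μI + μC - rf)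
    (V : ℝ → ℝ) (hVode : ∀ t, HasDerivAt V (rr * V t) t) :
    xvaDef rr rf rc μI μC α L_I L_C T V T = 0 ∧
    ∀ t, HasDerivAt (xvaDef rr rf rc μI μC α L_I L_C T V)
      (-((rf - rc) * α * V t + (rr - rf) * V t
          + (μI - rf) * (-(L_I * max ((1 - α) * V t) 0))
          + (μC - rf) * (L_C * max (-((1 - α) * V t)) 0)
          - (μI + μC - rf) * xvaDef rr rf rc μI μC α L_I L_C T V t)) t := by
  refine ⟨by simp [xvaDef], fun t => ?_⟩
  have hne : μI + μC - rf ≠ rr := hη.ne'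
  have hpos := hasDerivAt_max_zero_of_hasDerivAt
    (hasDerivAt_const_mul_of_hasDerivAt hVode (1 - α))
  have hneg := hasDerivAt_max_zero_of_hasDerivAt
    (hasDerivAt_const_mul_of_hasDerivAt hVode (-(1 - α)))
  simp only [neg_mul] at hneg
  have hsum := ((hasDerivAt_mul_Kker_mul (T := T) hne hVode ((rr - rf) + α * (rf - rc)) t).add
    (hasDerivAt_mul_Kker_mul (T := T) hne hneg ((μC - rf) * L_C) t)).sub
    (hasDerivAt_mul_Kker_mul (T := T) hne hpos ((μI - rf) * L_I) t)
  exact hsum.congr_deriv (by simp only [xvaDef]; ring)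

/-- Deterministic verification of the explicit XVA formula in Piterbarg's model with
defaults: u solves the reduced linear ODE with terminal condition zero. -/
theorem piterbarg_defaults_ode (rr rf rc μI μC α L_I L_C T : ℝ)
    (hη : rr < μI + μC - rf) (hα : α ∈ Set.Icc (0 : ℝ) 1)
    (hI : L_I ∈ Set.Icc (0 : ℝ) 1) (hC : L_C ∈ Set.Icc (0 : ℝ) 1) (hT : 0 < T)
    (V : ℝ → ℝ) (hVode : ∀ t, HasDerivAt V (rr * V t) t) :
    xvaDef rr rf rc μI μC α L_I L_C T V T = 0 ∧
    ∀ t, HasDerivAt (xvaDef rr rf rc μI μC α L_I L_C T V)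
      (-((rf - rc) * α * V t + (rr - rf) * V t
          + (μI - rf) * (-(L_I * max ((1 - α) * V t) 0))
          + (μC - rf) * (L_C * max (-((1 - α) * V t)) 0)
          - (μI + μC - rf) * xvaDef rr rf rc μI μC α L_I L_C T V t)) t :=
  piterbarg_defaults_ode_general rr rf rc μI μC α L_I L_C T hη V hVode
end

section
/- Consider the Black-Scholes model $S_T = \frac{B_T^{r}}{B_t^{r}} S_t \exp\big(-\frac{\sigma^2}{2}(T-t) + \sigma(W_T - W_t)\big)$ with $B_t^r = e^{rt}$ and $W$ a standard Brownian motion under $\mathbb{Q}$. Let $\Phi: \mathbb{R}_{>0} \to \mathbb{R}$ be continuously differentiable with $\Phi$ and $\Phi'$ of polynomial growth, and define the delta $\hat\Delta(t, S_t) = \frac{\partial}{\partial S}\mathbb{E}^{\mathbb{Q}}\big[e^{-r(T-t)}\Phi(S_T) \mid \mathcal{F}_t\big]$. Then the process $t \mapsto \hat\Delta(t, S_t)\frac{S_t}{B_t^r}$ is a $\mathbb{Q}$-martingale; equivalently, $\hat\Delta(t,S_t)\frac{S_t}{B_t^r} = \mathbb{E}^{\mathbb{Q}}\big[\Phi'(S_T)\frac{S_T}{B_T^r}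 \mid \mathcal{F}_t\big]$. -/
/-!
The delta is obtained by differentiating under the Gaussian integral. Writing
`S_T = s c(y)` with the lognormal factor `c(y) = exp (A + b y)`, the derivative
`Φ'(x c(y)) c(y)` is dominated, uniformly for `x` near `s`, by `C c + C (2s)ⁿ cⁿ⁺¹`
thanks to the polynomial growth of `Φ'`; this is integrable because `c` has Gaussian
exponential moments of every order. Hence `Δ(s) s e^{-rt} = e^{-rT} E[Φ'(s c) s c]`.
-/

open MeasureTheory ProbabilityTheory Real Set

theorem ContinuousOn.measurable_comp_of_forall_mem {α β γ : Type*} [MeasurableSpace α]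
    [TopologicalSpace β] [MeasurableSpace β] [OpensMeasurableSpace β]
    [TopologicalSpace γ] [MeasurableSpace γ] [BorelSpace γ] [Nonempty γ]
    {g : β → γ} {s : Set β} (hg : ContinuousOn g s)
    (hs : MeasurableSet s) {f : α → β} (hf : Measurable f) (hfs : ∀ a, f a ∈ s) :
    Measurable (fun a ↦ g (f a)) := by
  classical
  obtain ⟨z⟩ := ‹Nonempty γ›
  have hpiece : (fun a ↦ g (f a)) = s.piecewise g (fun _ ↦ z) ∘ f := by
    ext a; simp [hfs a]
  rw [hpiece]
  exact (hg.measurable_piecewise continuousOn_const hs).comp hf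

lemma abs_apply_mul_le_of_growth {g : ℝ → ℝ} {C : ℝ} {n : ℕ} (hC : 0 ≤ C)
    (hg : ∀ z, 0 < z → |g z| ≤ C * (1 + z ^ n)) {x R c : ℝ} (hx : 0 < x) (hxR : x ≤ R)
    (hc : 0 < c) : |g (x * c)| ≤ C + C * R ^ n * c ^ n := by
  calc |g (x * c)| ≤ C * (1 + (x * c) ^ n) := hg _ (mul_pos hx hc)
    _ ≤ C * (1 + (R * c) ^ n) := by gcongr
    _ = C + C * R ^ n * c ^ n := by ring

theorem hasDerivAt_integral_comp_mul {α : Type*} [MeasurableSpace α] {μ : Measure α}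
    [IsFiniteMeasure μ] {c : α → ℝ} (hc : Measurable c)
    (hc_pos : ∀ a, 0 < c a) (hc_int : ∀ k : ℕ, Integrable (fun a ↦ c a ^ k) μ)
    {Φ : ℝ → ℝ} (hΦ : ContDiffOn ℝ 1 Φ (Ioi 0)) {C : ℝ} {n : ℕ}
    (hΦ_growth : ∀ z, 0 < z → |Φ z| ≤ C * (1 + z ^ n))
    (hΦ'_growth : ∀ z, 0 < z → |deriv Φ z| ≤ C * (1 + z ^ n)) {s : ℝ} (hs : 0 < s) :
    HasDerivAt (fun x ↦ ∫ a, Φ (x * c a) ∂μ) (∫ a, deriv Φ (s * c a) * c a ∂μ) s := by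
  have hC : 0 ≤ C := by
    have := (abs_nonneg _).trans (hΦ_growth 1 one_pos)
    rw [one_pow] at this
    linarith
  have hmem : ∀ {x}, 0 < x → ∀ a, x * c a ∈ Ioi 0 := fun hx a ↦ mul_pos hx (hc_pos a)
  have hΦ_meas : ∀ {x}, 0 < x → AEStronglyMeasurable (fun a ↦ Φ (x * c a)) μ := fun hx ↦
    (hΦ.continuousOn.measurable_comp_of_forall_mem measurableSet_Ioi
      (hc.const_mul _) (hmem hx)).aestronglyMeasurable
  have hΦ'_meas : AEStronglyMeasurable (fun a ↦ deriv Φ (s * c a) * c a) μ :=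
    (((hΦ.continuousOn_deriv_of_isOpen isOpen_Ioi le_rfl).measurable_comp_of_forall_mem
      measurableSet_Ioi (hc.const_mul _) (hmem hs)).mul hc).aestronglyMeasurable
  have hΦ_int : Integrable (fun a ↦ Φ (s * c a)) μ := by
    refine ((integrable_const C).add ((hc_int n).const_mul (C * s ^ n))).mono' (hΦ_meas hs) ?_
    exact ae_of_all _ fun a ↦ abs_apply_mul_le_of_growth hC hΦ_growth hs le_rfl (hc_pos a)
  have hnhds : Ioo (s / 2) (2 * s) ∈ nhds s := Ioo_mem_nhds (by linarith) (by linarith)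
  have hpos : ∀ x ∈ Ioo (s / 2) (2 * s), 0 < x := fun x hx ↦ by linarith [hx.1]
  refine (hasDerivAt_integral_of_dominated_loc_of_deriv_le hnhds
    (Filter.eventually_of_mem hnhds fun x hx ↦ hΦ_meas (hpos x hx)) hΦ_int
    (F' := fun x a ↦ deriv Φ (x * c a) * c a) hΦ'_meas
    (bound := fun a ↦ C * c a ^ 1 + C * (2 * s) ^ n * c a ^ (n + 1)) ?_
    (((hc_int 1).const_mul C).add ((hc_int (n + 1)).const_mul _)) ?_).2
  · refine ae_of_all _ fun a x hx ↦ ?_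
    have h := abs_apply_mul_le_of_growth hC hΦ'_growth (hpos x hx) hx.2.le (hc_pos a)
    rw [Real.norm_eq_abs, abs_mul, abs_of_pos (hc_pos a)]
    calc |deriv Φ (x * c a)| * c a ≤ (C + C * (2 * s) ^ n * c a ^ n) * c a :=
          mul_le_mul_of_nonneg_right h (hc_pos a).le
      _ = C * c a ^ 1 + C * (2 * s) ^ n * c a ^ (n + 1) := by ring
  · refine ae_of_all _ fun a x hx ↦ ?_
    have hΦx : HasDerivAt Φ (deriv Φ (x * c a)) (x * c a) :=
      ((hΦ.differentiableOn one_ne_zero _ (hmem (hpos x hx) a)).differentiableAt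
        (isOpen_Ioi.mem_nhds (hmem (hpos x hx) a))).hasDerivAt
    exact hΦx.comp x (hasDerivAt_mul_const (c a))

lemma integrable_exp_affine_pow_gaussianReal (A b : ℝ) (k : ℕ) (m : ℝ) (v : NNReal) :
    Integrable (fun y ↦ exp (A + b * y) ^ k) (gaussianReal m v) := by
  have h : (fun y ↦ exp (A + b * y) ^ k) = fun y ↦ exp (k * A) * exp (k * b * y) := by
    ext y
    rw [← Real.exp_nat_mul, ← Real.exp_add]
    ring_nf
  rw [h]
  exact (integrable_exp_mul_gaussianReal _).const_mul _

theorem discounted_delta_martingale_general (r σ T t : ℝ)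
    (Φ : ℝ → ℝ) (hΦ : ContDiffOn ℝ 1 Φ (Set.Ioi 0))
    (hgrowth : ∃ C : ℝ, ∃ n : ℕ, ∀ x : ℝ, 0 < x →
      |Φ x| ≤ C * (1 + x ^ n) ∧ |deriv Φ x| ≤ C * (1 + x ^ n)) :
    ∀ s : ℝ, 0 < s →
      deriv (fun x : ℝ =>
          Real.exp (-r * (T - t)) *
            ∫ y, Φ (x * Real.exp ((r - σ ^ 2 / 2) * (T - t) + σ * Real.sqrt (T - t) * y))
              ∂(gaussianReal 0 1)) s * s * Real.exp (-r * t)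
        = ∫ y,
            deriv Φ (s * Real.exp ((r - σ ^ 2 / 2) * (T - t) + σ * Real.sqrt (T - t) * y))
              * (s * Real.exp ((r - σ ^ 2 / 2) * (T - t) + σ * Real.sqrt (T - t) * y))
              * Real.exp (-r * T) ∂(gaussianReal 0 1) := by
  intro s hs
  obtain ⟨C, n, hCn⟩ := hgrowth
  set c : ℝ → ℝ := fun y ↦ exp ((r - σ ^ 2 / 2) * (T - t) + σ * √(T - t) * y)
  have hderiv := (hasDerivAt_integral_comp_mul (μ := gaussianReal 0 1) (c := c)
    (by fun_prop) (fun _ ↦ exp_pos _) (integrable_exp_affine_pow_gaussianReal _ _ · _ _) hΦ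
    (fun z hz ↦ (hCn z hz).1) (fun z hz ↦ (hCn z hz).2) hs).const_mul (exp (-r * (T - t)))
  have hdiscount : exp (-r * (T - t)) * exp (-r * t) = exp (-r * T) := by
    rw [← exp_add]; ring_nf
  rw [hderiv.deriv, ← hdiscount]
  calc _ = ∫ y, deriv Φ (s * c y) * c y * (s * (exp (-r * (T - t)) * exp (-r * t)))
        ∂(gaussianReal 0 1) := by rw [integral_mul_const]; ring
    _ = _ := by congr 1 with y; ring

/-- Martingale property of the discounted delta-weighted stock position in the
Black-Scholes model, expressed over the lognormal (Gaussian) law: the discounted delta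
times the stock price at time t equals the expectation of Φ'(S_T) S_T / B_T. -/
theorem discounted_delta_martingale (r σ T t : ℝ) (hσ : 0 < σ)
    (ht : 0 ≤ t) (htT : t < T)
    (Φ : ℝ → ℝ) (hΦ : ContDiffOn ℝ 1 Φ (Set.Ioi 0))
    (hgrowth : ∃ C : ℝ, ∃ n : ℕ, ∀ x : ℝ, 0 < x →
      |Φ x| ≤ C * (1 + x ^ n) ∧ |deriv Φ x| ≤ C * (1 + x ^ n)) :
    ∀ s : ℝ, 0 < s →
      deriv (fun x : ℝ =>
          Real.exp (-r * (T - t)) *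
            ∫ y, Φ (x * Real.exp ((r - σ ^ 2 / 2) * (T - t) + σ * Real.sqrt (T - t) * y))
              ∂(gaussianReal 0 1)) s * s * Real.exp (-r * t)
        = ∫ y,
            deriv Φ (s * Real.exp ((r - σ ^ 2 / 2) * (T - t) + σ * Real.sqrt (T - t) * y))
              * (s * Real.exp ((r - σ ^ 2 / 2) * (T - t) + σ * Real.sqrt (T - t) * y))
              * Real.exp (-r * T) ∂(gaussianReal 0 1) :=
  discounted_delta_martingale_general r σ T t Φ hΦ hgrowth
end

section
/- Let $r_f^+ \le r_f^-$, $r_c^+ \vee r_c^- \le r_f^-$, $\mu_I \ge r_f^-$, $\mu_C \ge r_f^-$, $h_I = \mu_I - r_D$, $h_C = \mu_C - r_D$, $\alpha \in [0,1]$, $L_I, L_C \in [0,1]$. Define $\theta_I(v) = v - L_I((1-\alpha)v)^+$, $\theta_C(v) = v + L_C((1-\alpha)v)^-$, and for fixed $(\bar u, \bar z)$ the map $G(\hat v) := h_I(\theta_I(\hat v) - \bar u) + h_C(\theta_C(\hat v) - \bar u) - r_f^+\big(\theta_I(\hat v) + \theta_C(\hat v) - \bar u - \alpha\hat v\big)^+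 + r_f^-\big(\theta_I(\hat v) + \theta_C(\hat v) - \bar u - \alpha\hat v\big)^- + r_D\big(\theta_I(\hat v) + \theta_C(\hat v)\big) - r_c^+(\alpha\hat v)^+ + r_c^-(\alpha\hat v)^-$ (the $\hat v$-dependent part of the driver $g^+$). Then $G$ is monotone nondecreasing in $\hat v$. -/
private lemma neg_part_eq (t : ℝ) : max (-t) 0 = max t 0 - t := by
  rcases le_total t 0 with h | h
  · rw [max_eq_left (by linarith : (0:ℝ) ≤ -t) , max_eq_right h]; ring
  · rw [max_eq_right (by linarith : -t ≤ (0:ℝ)), max_eq_left h]; ring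

private lemma pos_part_diff_bounds {a b : ℝ} (hab : a ≤ b) :
    0 ≤ max b 0 - max a 0 ∧ max b 0 - max a 0 ≤ b - a := by
  rcases le_total a 0 with h | h <;> rcases le_total b 0 with h' | h' <;>
    constructor <;>
    simp [max_eq_left, max_eq_right, *] <;> linarith

/-- Monotonicity in the public value v̂ of the v̂-dependent part of the reduced BSDE
driver g⁺ (key step in the comparison argument of the arbitrage-free valuation theorem). -/
theorem driver_monotone_in_public_value
    (rfp rfm rcp rcm rD μI μC α L_I L_C ubar : ℝ)
    (h1 : rfp ≤ rfm) (h2 : max rcp rcm ≤ rfm) (h3 : rfm ≤ μI) (h4 : rfm ≤ μC)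
    (hα : α ∈ Set.Icc (0 : ℝ) 1) (hI : L_I ∈ Set.Icc (0 : ℝ) 1)
    (hC : L_C ∈ Set.Icc (0 : ℝ) 1) :
    Monotone (fun vhat : ℝ =>
      let θI := vhat - L_I * max ((1 - α) * vhat) 0
      let θC := vhat + L_C * max (-((1 - α) * vhat)) 0
      (μI - rD) * (θI - ubar) + (μC - rD) * (θC - ubar)
        - rfp * max (θI + θC - ubar - α * vhat) 0
        + rfm * max (-(θI + θC - ubar - α * vhat)) 0
        + rD * (θI + θC)
        - rcp * max (α * vhat) 0 + rcm * max (-(α * vhat)) 0) := by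
  obtain ⟨hα0, hα1⟩ := hα
  obtain ⟨hI0, hI1⟩ := hI
  obtain ⟨hC0, hC1⟩ := hC
  have hcp : rcp ≤ rfm := le_trans (le_max_left _ _) h2
  have hcm : rcm ≤ rfm := le_trans (le_max_right _ _) h2
  intro x y hxy
  dsimp only
  -- abbreviations
  set Ax := max ((1 - α) * x) 0 with hAxdef
  set Ay := max ((1 - α) * y) 0 with hAydef
  set Bx := max (-((1 - α) * x)) 0 with hBxdef
  set By := max (-((1 - α) * y)) 0 with hBydef
  set θIx := x - L_I * Ax with hθIx
  set θIy := y - L_I * Ay with hθIy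
  set θCx := x + L_C * Bx with hθCx
  set θCy := y + L_C * By with hθCy
  -- bounds on positive-part differences
  have hax : (1 - α) * x ≤ (1 - α) * y :=
    mul_le_mul_of_nonneg_left hxy (by linarith)
  have hA : 0 ≤ Ay - Ax ∧ Ay - Ax ≤ (1 - α) * y - (1 - α) * x :=
    pos_part_diff_bounds hax
  have hB : 0 ≤ Bx - By ∧ Bx - By ≤ (1 - α) * y - (1 - α) * x := by
    have := pos_part_diff_bounds (neg_le_neg hax)
    constructor <;> [linarith [this.1]; linarith [this.2]]
  -- monotonicity of θI and θC with slope at least α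
  have hLIA : L_I * (Ay - Ax) ≤ Ay - Ax := by
    have := mul_nonneg (by linarith : (0:ℝ) ≤ 1 - L_I) hA.1; linarith
  have hLCB : L_C * (Bx - By) ≤ Bx - By := by
    have := mul_nonneg (by linarith : (0:ℝ) ≤ 1 - L_C) hB.1; linarith
  have hθI : α * (y - x) ≤ θIy - θIx := by
    rw [hθIx, hθIy]; linarith [hA.2, hLIA]
  have hθC : α * (y - x) ≤ θCy - θCx := by
    rw [hθCx, hθCy]; linarith [hB.2, hLCB]
  have hαxy : α * x ≤ α * y := mul_le_mul_of_nonneg_left hxy hα0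
  have hαd : 0 ≤ α * (y - x) := by
    have := mul_nonneg hα0 (by linarith : (0:ℝ) ≤ y - x); linarith
  -- monotonicity of X = θI + θC - ubar - αv
  have hX : θIx + θCx - ubar - α * x ≤ θIy + θCy - ubar - α * y := by linarith
  set Mx := max (θIx + θCx - ubar - α * x) 0 with hMx
  set My := max (θIy + θCy - ubar - α * y) 0 with hMy
  have hM : Mx ≤ My := max_le_max hX le_rfl
  set wpx := max (α * x) 0 with hwpx
  set wpy := max (α * y) 0 with hwpy
  have hwp : wpx ≤ wpy := max_le_max hαxy le_rfl
  -- rewrite negative parts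
  rw [neg_part_eq (θIx + θCx - ubar - α * x), neg_part_eq (θIy + θCy - ubar - α * y),
    neg_part_eq (α * x), neg_part_eq (α * y)]
  -- final linear combination
  have t1 : 0 ≤ (μI - rfm) * (θIy - θIx) := mul_nonneg (by linarith) (by linarith)
  have t2 : 0 ≤ (μC - rfm) * (θCy - θCx) := mul_nonneg (by linarith) (by linarith)
  have t3 : 0 ≤ (rfm - rfp) * (My - Mx) := mul_nonneg (by linarith) (by linarith)
  have t4 : 0 ≤ (rfm - rcp) * (wpy - wpx) := mul_nonneg (by linarith) (by linarith)
  have t5 : 0 ≤ (rfm - rcm) * ((wpx - α * x) - (wpy - α * y)) := by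
    apply mul_nonneg (by linarith)
    have := neg_part_eq (α * x)
    have := neg_part_eq (α * y)
    have hwn : max (-(α * y)) 0 ≤ max (-(α * x)) 0 :=
      max_le_max (neg_le_neg hαxy) le_rfl
    linarith
  linarith [t1, t2, t3, t4, t5]
end
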